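/- arXiv:1805.05406 — 2 statements merged into one kernel-verified Lean document; each statement's English description precedes it below -/
import Mathlib

section
/- Let R = μ₀R⁰ + Σ_{i=1}^m μᵢR^{Jᵢ} be a quasi-Clifford algebraic curvature tensor on an n-dimensional scalar product space (V,g), with Hurwitz-like constants satisfying cᵢ ≠ 0 for 1 ≤ i ≤ k and cᵢ = 0 for k < i ≤ m. Then for every nonnull X ∈ V, as polynomials in λ, det(ε_X·λ·id − 𝒥_X) = (ε_X)ⁿ · λ · (λ − μ₀)^{n−k−1} · ∏_{i=1}^k (λ − (μ₀ + 3cᵢμᵢ)). -/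
open Module Finset

/-- The algebraic curvature tensor `R⁰` of constant sectional curvature one. -/
def R0 {V : Type*} [AddCommGroup V] [Module ℝ V] (g : LinearMap.BilinForm ℝ V)
    (X Y Z W : V) : ℝ :=
  g Y Z * g X W - g X Z * g Y W

/-- The algebraic curvature tensor `R^J` generated by a `g`-skew-adjoint endomorphism `J`. -/
def RJ {V : Type*} [AddCommGroup V] [Module ℝ V] (g : LinearMap.BilinForm ℝ V)
    (J : V →ₗ[ℝ] V) (X Y Z W : V) : ℝ :=
  g (J X) Z * g (J Y) W - g (J Y) Z * g (J X) W + 2 * g (J X) Y * g (J Z) W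

/-!
For nonnull `X`, the Hurwitz relations make `X, J₁X, …, JₘX` pairwise `g`-orthogonal with
`g(JᵢX, JᵢX) = -cᵢ ε_X`, and `R^{Jᵢ}(Y, X, X, Z) = -3 g(Y, JᵢX) g(JᵢX, Z)`, so
`ε_X λ id - 𝒥_X = ε_X (λ - μ₀) id + μ₀ g(·, X) X + 3 ∑ μᵢ g(·, JᵢX) JᵢX`.
Rank-one maps along mutually orthogonal vectors compose to zero, so the determinant of such a
map factors as a product of one-dimensional determinants `1 + t g(u, u)`. This gives the formula
for `λ ≠ μ₀`, and both sides are polynomial in `λ`. The exponent `n - k - 1` does not truncate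
because `X, J₁X, …, J_kX` are orthogonal and nonnull, hence independent.
-/

section RankOne

variable {K V : Type*} [Field K] [AddCommGroup V] [Module K V] [FiniteDimensional K V]

theorem LinearMap.det_id_add_smulRight (φ : V →ₗ[K] K) (u : V) :
    (LinearMap.id + φ.smulRight u).det = 1 + φ u := by
  let b := finBasis K V
  rw [← LinearMap.det_toMatrix b, map_add, LinearMap.toMatrix_id, LinearMap.toMatrix_smulRight,
    Matrix.vecMulVec_eq Unit, Matrix.det_one_add_replicateCol_mul_replicateRow]
  conv_rhs => rw [← b.sum_repr u, map_sum]
  simp [dotProduct, mul_comm]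

theorem LinearMap.det_id_add_sum_smulRight_of_iIsOrtho (B : LinearMap.BilinForm K V)
    {ι : Type*} [DecidableEq ι] {u : ι → V} (hu : B.iIsOrtho u) (t : ι → K) (s : Finset ι) :
    (LinearMap.id + ∑ i ∈ s, t i • (B.flip (u i)).smulRight (u i)).det
      = ∏ i ∈ s, (1 + t i * B (u i) (u i)) := by
  induction s using Finset.induction_on with
  | empty => simp
  | @insert a s ha ih =>
    set P : ι → V →ₗ[K] V := fun i => t i • (B.flip (u i)).smulRight (u i)
    -- `P a ∘ P i = 0` for `i ≠ a`, so `id + P a + ∑ P i = (id + P a) ∘ (id + ∑ P i)`.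
    have hfactor : LinearMap.id + ∑ i ∈ insert a s, P i
        = (LinearMap.id + P a) ∘ₗ (LinearMap.id + ∑ i ∈ s, P i) := by
      have hvanish : P a ∘ₗ ∑ i ∈ s, P i = 0 := by
        ext y
        simp only [P, LinearMap.comp_apply, LinearMap.sum_apply, LinearMap.smul_apply,
          LinearMap.smulRight_apply, map_sum, map_smul]
        refine Finset.sum_eq_zero fun i hi => ?_
        have h0 : B (u i) (u a) = 0 := hu (ne_of_mem_of_not_mem hi ha)
        simp [h0]
      rw [LinearMap.comp_add, LinearMap.add_comp, LinearMap.add_comp, hvanish, sum_insert ha]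
      simp only [LinearMap.id_comp, LinearMap.comp_id]
      abel
    have hPa : P a = (t a • B.flip (u a)).smulRight (u a) := by
      ext y; simp [P, smul_smul]
    rw [hfactor, LinearMap.det_comp, ih, prod_insert ha, hPa, LinearMap.det_id_add_smulRight]
    simp

theorem LinearMap.det_smul_id_add_sum_smulRight_of_iIsOrtho (B : LinearMap.BilinForm K V)
    {ι : Type*} [DecidableEq ι] {u : ι → V} (hu : B.iIsOrtho u) (t : ι → K) (s : Finset ι)
    {a : K} (ha : a ≠ 0) :
    (a • LinearMap.id + ∑ i ∈ s, t i • (B.flip (u i)).smulRight (u i)).det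
      = a ^ finrank K V * ∏ i ∈ s, (1 + t i / a * B (u i) (u i)) := by
  have : a • LinearMap.id + ∑ i ∈ s, t i • (B.flip (u i)).smulRight (u i)
      = a • (LinearMap.id + ∑ i ∈ s, (t i / a) • (B.flip (u i)).smulRight (u i)) := by
    simp only [smul_add, smul_sum, smul_smul, mul_div_cancel₀ _ ha]
  rw [this, LinearMap.det_smul, LinearMap.det_id_add_sum_smulRight_of_iIsOrtho B hu]

end RankOne

theorem pow_mul_div_mul_prod_div {K ι : Type*} [Field K] [Fintype ι] {s : Finset ι} {n : ℕ}
    (hsn : #s < n) {x : K} (hx : x ≠ 0) (e l : K) {y : ι → K} (hy : ∀ i ∉ s, y i = x) :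
    (e * x) ^ n * (l / x) * ∏ i, y i / x = e ^ n * l * x ^ (n - #s - 1) * ∏ i ∈ s, y i := by
  rw [← prod_subset (subset_univ s) fun i _ hi => by rw [hy i hi, div_self hx],
    prod_div_distrib, prod_const]
  obtain ⟨d, rfl⟩ : ∃ d, n = d + #s + 1 := ⟨n - #s - 1, by omega⟩
  rw [show d + #s + 1 - #s - 1 = d by omega]
  field_simp
  ring

section Skew

variable {V : Type*} [AddCommGroup V] [Module ℝ V] {g : LinearMap.BilinForm ℝ V}
  {A B : V →ₗ[ℝ] V}

theorem apply_self_eq_zero_of_skew (hsymm : ∀ x y, g x y = g y x)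
    (hA : ∀ x y, g (A x) y = - g x (A y)) (x : V) : g (A x) x = 0 := by
  linarith [hA x x, hsymm (A x) x]

theorem apply_apply_eq_zero_of_anticomm (hsymm : ∀ x y, g x y = g y x)
    (hA : ∀ x y, g (A x) y = - g x (A y)) (hB : ∀ x y, g (B x) y = - g x (B y))
    (hAB : A ∘ₗ B + B ∘ₗ A = 0) (x : V) : g (A x) (B x) = 0 := by
  have hBA : A (B x) = - B (A x) := eq_neg_of_add_eq_zero_left (LinearMap.congr_fun hAB x)
  have h := hA x (B x)
  rw [hBA, map_neg] at h
  linarith [hB x (A x), hsymm (A x) (B x)]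

theorem apply_apply_self_eq_of_comp_self (hA : ∀ x y, g (A x) y = - g x (A y)) {c : ℝ}
    (hAA : A ∘ₗ A = c • LinearMap.id) (x : V) : g (A x) (A x) = -(c * g x x) := by
  rw [hA, ← LinearMap.comp_apply A A, hAA]
  simp

end Skew

section Hurwitz

variable {V : Type*} [AddCommGroup V] [Module ℝ V] {ι : Type*} [DecidableEq ι]
  {J : ι → V →ₗ[ℝ] V} {c : ι → ℝ}

def HurwitzRelations (J : ι → V →ₗ[ℝ] V) (c : ι → ℝ) : Prop :=
  ∀ i j, J i ∘ₗ J j + J j ∘ₗ J i = (if i = j then 2 * c i else 0 : ℝ) • LinearMap.id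

theorem comp_self_eq_of_hurwitz (hhur : HurwitzRelations J c) (i : ι) :
    J i ∘ₗ J i = c i • LinearMap.id := by
  ext x
  have h := LinearMap.congr_fun (hhur i i) x
  simp only [if_pos, LinearMap.add_apply, LinearMap.comp_apply, LinearMap.smul_apply,
    LinearMap.id_apply] at h ⊢
  linear_combination (norm := module) (2⁻¹ : ℝ) • h

theorem anticomm_of_hurwitz (hhur : HurwitzRelations J c) {i j : ι} (hij : i ≠ j) :
    J i ∘ₗ J j + J j ∘ₗ J i = 0 := by
  rw [hhur, if_neg hij, zero_smul]

end Hurwitz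

section QuasiClifford

variable {V : Type*} [AddCommGroup V] [Module ℝ V] {g : LinearMap.BilinForm ℝ V}
  {ι : Type*} {J : ι → V →ₗ[ℝ] V}

def cliffordVectors (J : ι → V →ₗ[ℝ] V) (X : V) : Option ι → V :=
  fun o => o.elim X (J · X)

@[simp] theorem cliffordVectors_none (J : ι → V →ₗ[ℝ] V) (X : V) :
    cliffordVectors J X none = X :=
  rfl

@[simp] theorem cliffordVectors_some (J : ι → V →ₗ[ℝ] V) (X : V) (i : ι) :
    cliffordVectors J X (some i) = J i X :=
  rfl

def jacobiCoeffs (μ₀ : ℝ) (μ : ι → ℝ) : Option ι → ℝ :=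
  fun o => o.elim μ₀ (3 * μ ·)

@[simp] theorem jacobiCoeffs_none (μ₀ : ℝ) (μ : ι → ℝ) : jacobiCoeffs μ₀ μ none = μ₀ :=
  rfl

@[simp] theorem jacobiCoeffs_some (μ₀ : ℝ) (μ : ι → ℝ) (i : ι) :
    jacobiCoeffs μ₀ μ (some i) = 3 * μ i :=
  rfl

theorem iIsOrtho_cliffordVectors [DecidableEq ι] {c : ι → ℝ} (hsymm : ∀ x y, g x y = g y x)
    (hskew : ∀ i, ∀ x y : V, g (J i x) y = - g x (J i y))
    (hhur : HurwitzRelations J c) (X : V) :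
    g.iIsOrtho (cliffordVectors J X) := by
  rw [LinearMap.BilinForm.iIsOrtho_def]
  rintro (_ | i) (_ | j) hij
  · exact absurd rfl hij
  · rw [cliffordVectors_none, cliffordVectors_some, hsymm]
    exact apply_self_eq_zero_of_skew hsymm (hskew j) X
  · exact apply_self_eq_zero_of_skew hsymm (hskew i) X
  · exact apply_apply_eq_zero_of_anticomm hsymm (hskew i) (hskew j)
      (anticomm_of_hurwitz hhur (fun h => hij (congrArg some h))) X

theorem card_lt_finrank_of_hurwitz [FiniteDimensional ℝ V] [DecidableEq ι] {c : ι → ℝ}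
    (hsymm : ∀ x y, g x y = g y x) (hskew : ∀ i, ∀ x y : V, g (J i x) y = - g x (J i y))
    (hhur : HurwitzRelations J c) {X : V} (hX : g X X ≠ 0) {s : Finset ι} (hs : ∀ i ∈ s, c i ≠ 0) :
    #s < finrank ℝ V := by
  let u : Option s → V := fun o => cliffordVectors J X (o.map Subtype.val)
  have hu : g.iIsOrtho u := (iIsOrtho_cliffordVectors hsymm hskew hhur X).comp_of_injective
    (Option.map_injective Subtype.val_injective)
  have hnonnull : ∀ o, g (u o) (u o) ≠ 0 := by
    rintro (_ | ⟨i, hi⟩)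
    · exact hX
    · simp only [u, Option.map_some, cliffordVectors_some,
        apply_apply_self_eq_of_comp_self (hskew i) (comp_self_eq_of_hurwitz hhur i)]
      exact neg_ne_zero.mpr (mul_ne_zero (hs i hi) hX)
  simpa using
    (LinearMap.BilinForm.linearIndependent_of_iIsOrtho hu hnonnull).fintype_card_le_finrank

theorem RJ_apply_self_self (hsymm : ∀ x y, g x y = g y x) {A : V →ₗ[ℝ] V}
    (hA : ∀ x y, g (A x) y = - g x (A y)) (X Y Z : V) :
    RJ g A Y X X Z = -(3 * g Y (A X) * g (A X) Z) := by
  rw [RJ, apply_self_eq_zero_of_skew hsymm hA X, hA Y X]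
  ring

theorem jacobi_eq_of_quasiClifford [Fintype ι] (hsymm : ∀ x y, g x y = g y x)
    (hnd : g.Nondegenerate) (hskew : ∀ i, ∀ x y : V, g (J i x) y = - g x (J i y))
    (μ₀ : ℝ) (μ : ι → ℝ) (X : V) (Jac : V →ₗ[ℝ] V)
    (hJac : ∀ Y Z, g (Jac Y) Z = μ₀ * R0 g Y X X Z + ∑ i, μ i * RJ g (J i) Y X X Z) :
    Jac = (μ₀ * g X X) • LinearMap.id - ∑ o, jacobiCoeffs μ₀ μ o •
      (g.flip (cliffordVectors J X o)).smulRight (cliffordVectors J X o) := by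
  ext Y
  refine sub_eq_zero.mp (hnd.1 _ fun Z => ?_)
  simp only [map_sub, LinearMap.sub_apply, hJac, R0, RJ_apply_self_self hsymm (hskew _),
    Fintype.sum_option, LinearMap.add_apply, LinearMap.sum_apply, LinearMap.smul_apply,
    LinearMap.id_apply, LinearMap.smulRight_apply, map_add, map_sum,
    LinearMap.BilinForm.flip_apply, map_smul, smul_eq_mul, jacobiCoeffs_none, jacobiCoeffs_some,
    cliffordVectors_none, cliffordVectors_some, mul_neg, sum_neg_distrib]
  simp only [← mul_assoc, mul_comm (μ _) 3]
  ring

theorem det_smul_id_sub_jacobi_of_ne [FiniteDimensional ℝ V] [Fintype ι] [DecidableEq ι]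
    {c : ι → ℝ} (hsymm : ∀ x y, g x y = g y x)
    (hskew : ∀ i, ∀ x y : V, g (J i x) y = - g x (J i y)) (hhur : HurwitzRelations J c)
    {X : V} (hX : g X X ≠ 0) (μ₀ : ℝ) (μ : ι → ℝ) {l : ℝ} (hl : l ≠ μ₀) :
    ((g X X * l) • LinearMap.id - ((μ₀ * g X X) • LinearMap.id - ∑ o, jacobiCoeffs μ₀ μ o •
      (g.flip (cliffordVectors J X o)).smulRight (cliffordVectors J X o))).det
      = (g X X * (l - μ₀)) ^ finrank ℝ V * (l / (l - μ₀))
        * ∏ i, (l - (μ₀ + 3 * c i * μ i)) / (l - μ₀) := by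
  have hl' : l - μ₀ ≠ 0 := sub_ne_zero.mpr hl
  rw [show ∀ S : V →ₗ[ℝ] V, (g X X * l) • LinearMap.id - ((μ₀ * g X X) • LinearMap.id - S)
      = (g X X * (l - μ₀)) • LinearMap.id + S from fun S => by module,
    LinearMap.det_smul_id_add_sum_smulRight_of_iIsOrtho g
      (iIsOrtho_cliffordVectors hsymm hskew hhur X) _ _ (mul_ne_zero hX hl'),
    Fintype.prod_option]
  simp only [jacobiCoeffs_none, jacobiCoeffs_some, cliffordVectors_none, cliffordVectors_some,
    apply_apply_self_eq_of_comp_self (hskew _) (comp_self_eq_of_hurwitz hhur _)]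
  rw [mul_assoc]
  congr 2
  · field_simp
    ring
  · refine prod_congr rfl fun i _ => ?_
    field_simp
    ring

end QuasiClifford

/-- the characteristic equation of the Jacobi operator of a quasi-Clifford
curvature tensor: `det(ε_X λ id − 𝒥_X) = ε_Xⁿ λ (λ−μ₀)^{n−k−1} ∏_{i<k} (λ−(μ₀+3cᵢμᵢ))`
for every nonnull `X`. -/
theorem quasiClifford_char_equation
    {V : Type*} [AddCommGroup V] [Module ℝ V] [FiniteDimensional ℝ V]
    (g : LinearMap.BilinForm ℝ V) (hsymm : ∀ x y, g x y = g y x) (hnd : g.Nondegenerate)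
    {m : ℕ} (μ₀ : ℝ) (μ c : Fin m → ℝ) (J : Fin m → V →ₗ[ℝ] V)
    (hskew : ∀ i, ∀ x y : V, g (J i x) y = - g x (J i y))
    (hhur : ∀ i j, J i ∘ₗ J j + J j ∘ₗ J i
      = ((if i = j then 2 * c i else 0 : ℝ) • LinearMap.id : V →ₗ[ℝ] V))
    (R : V → V → V → V → ℝ)
    (hR : ∀ X Y Z W, R X Y Z W = μ₀ * R0 g X Y Z W + ∑ i, μ i * RJ g (J i) X Y Z W)
    (Jac : V → V →ₗ[ℝ] V)
    (hJac : ∀ X Y Z, g (Jac X Y) Z = R Y X X Z)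
    (n k : ℕ) (hn : Module.finrank ℝ V = n) (hk : k ≤ m)
    (hc₁ : ∀ i : Fin m, (i : ℕ) < k → c i ≠ 0)
    (hc₂ : ∀ i : Fin m, k ≤ (i : ℕ) → c i = 0) :
    ∀ X : V, g X X ≠ 0 → ∀ lam : ℝ,
      LinearMap.det ((g X X * lam) • (LinearMap.id : V →ₗ[ℝ] V) - Jac X)
        = (g X X) ^ n * lam * (lam - μ₀) ^ (n - k - 1) *
          ∏ i ∈ Finset.univ.filter (fun i : Fin m => (i : ℕ) < k),
            (lam - (μ₀ + 3 * c i * μ i)) := by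
  intro X hX lam
  have hJacX := jacobi_eq_of_quasiClifford hsymm hnd hskew μ₀ μ X (Jac X)
    fun Y Z => (hJac X Y Z).trans (hR Y X X Z)
  set s := Finset.univ.filter (fun i : Fin m => (i : ℕ) < k)
  have hs : #s = k := by simpa [hk] using Fin.card_filter_val_lt (n := m) (m := k)
  have hsn : k < n := hs ▸ hn ▸
    card_lt_finrank_of_hurwitz hsymm hskew hhur hX fun i hi => hc₁ i (mem_filter.mp hi).2
  suffices h : (fun l => ((g X X * l) • LinearMap.id - Jac X).det)
      = fun l => g X X ^ n * l * (l - μ₀) ^ (n - k - 1) * ∏ i ∈ s, (l - (μ₀ + 3 * c i * μ i))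
    from congrFun h lam
  refine Continuous.ext_on (dense_compl_singleton μ₀) ?_ (by fun_prop) fun l hl => ?_
  · simp only [← Module.algebraMap_end_eq_smul_id, ← LinearMap.eval_charpoly]
    fun_prop
  · rw [hJacX, det_smul_id_sub_jacobi_of_ne hsymm hskew hhur hX μ₀ μ hl, hn,
      pow_mul_div_mul_prod_div (hs ▸ hsn) (sub_ne_zero.mpr hl), hs]
    intro i hi
    rw [hc₂ i (by simpa [s] using hi)]
    ring
end

section
/- Any Clifford algebraic curvature tensor is totally Jacobi-dual. That is, if R = μ₀R⁰ + Σ_{i=1}^m μᵢR^{Jᵢ} on a scalar product space (V,g) where J₁,…,J_m are g-skew-adjoint, pairwise anti-commuting, and satisfy Jᵢ² = −id for all i, then for all X, Y ∈ V with X ≠ 0, if Y is an eigenvector of 𝒥_X then X is an eigenvector of 𝒥_Y. -/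
open Module Finset

/-!
Put `cᵢ = μᵢ g(JᵢX, Y)` and `W = ∑ cᵢ Jᵢ`. The Clifford relations give `W² = -(∑ cᵢ²) id`, and
skew-adjointness gives `𝒥_X Y = μ₀ (g(X,X) Y - g(X,Y) X) - 3 W X` and
`𝒥_Y X = μ₀ g(Y,Y) X + U` with `U = -b Y + 3 W Y`, `b = μ₀ g(X,Y)`.
If `𝒥_X Y = λ Y` then `d Y = b X + 3 W X` with `d = μ₀ g(X,X) - λ`, and applying `W` to this
relation yields `d U = -(b² + 9 ∑ cᵢ²) X`. So `U` is a multiple of `X` when `d ≠ 0`; when `d = 0`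
the coefficient vanishes, which forces `b = 0` and `W = 0`, hence `U = 0`.
-/

theorem sum_smul_mul_self_of_anticomm {R A ι : Type*} [CommRing R] [Ring A] [Algebra R A]
    [Invertible (2 : R)] [Fintype ι] [DecidableEq ι] (e : ι → A)
    (he : ∀ i j, e i * e j + e j * e i = (if i = j then -2 else 0 : R) • 1) (c : ι → R) :
    (∑ i, c i • e i) * (∑ i, c i • e i) = (-∑ i, c i ^ 2) • 1 := by
  set S := ∑ i, c i • e i
  have hS : S * S = ∑ i, ∑ j, (c i * c j) • (e i * e j) := by
    simp only [S, sum_mul_sum, smul_mul_smul_comm]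
  have hS' : S * S = ∑ i, ∑ j, (c i * c j) • (e j * e i) := by
    rw [hS, sum_comm]
    exact sum_congr rfl fun i _ => sum_congr rfl fun j _ => by rw [mul_comm]
  -- symmetrizing the double sum leaves only the anticommutators `e i * e j + e j * e i`
  have h2 : (2 : R) • (S * S) = (2 : R) • (-∑ i, c i ^ 2) • 1 := by
    rw [two_smul]
    nth_rw 1 [hS]
    rw [hS']
    simp only [← sum_add_distrib, ← smul_add, he, smul_smul]
    simp only [mul_ite, mul_zero, ite_smul, zero_smul, sum_ite_eq, mem_univ, if_true,
      ← sum_smul]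
    congr 1
    rw [mul_neg, mul_sum, ← sum_neg_distrib]
    exact sum_congr rfl fun i _ => by ring
  simpa using congrArg (⅟(2 : R) • ·) h2

theorem exists_eq_smul_of_smul_eq_smul {K M : Type*} [Field K] [AddCommGroup M] [Module K M]
    {d a : K} {U X : M} (h : d • U = a • X) (hX : X ≠ 0) (ha : a = 0 → U = 0) :
    ∃ t : K, U = t • X := by
  by_cases hd : d = 0
  · refine ⟨0, ?_⟩
    rw [hd, zero_smul, eq_comm, smul_eq_zero] at h
    rw [zero_smul, ha (h.resolve_right hX)]
  · exact ⟨d⁻¹ * a, by rw [mul_smul, ← h, inv_smul_smul₀ hd]⟩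

theorem smul_neg_smul_add_smul_apply {R M : Type*} [CommRing R] [AddCommGroup M] [Module R M]
    {W : Module.End R M} {s : R} (hW : ∀ v, W (W v) = -s • v) {X Y : M} {b d k : R}
    (h : d • Y = b • X + k • W X) :
    d • (-b • Y + k • W Y) = -(b ^ 2 + k ^ 2 * s) • X := by
  rw [smul_add, smul_comm d k, ← map_smul, smul_comm d, h, map_add, map_smul, map_smul, hW]
  module

theorem sq_add_mul_sum_sq_eq_zero_iff {K ι : Type*} [Field K] [LinearOrder K]
    [IsStrictOrderedRing K] [Fintype ι] {k b : K} (hk : k ≠ 0) {c : ι → K} :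
    b ^ 2 + k ^ 2 * ∑ i, c i ^ 2 = 0 ↔ b = 0 ∧ c = 0 := by
  have hk2 : 0 < k ^ 2 := by positivity
  rw [add_eq_zero_iff_of_nonneg (sq_nonneg b) (by positivity), mul_eq_zero,
    or_iff_right hk2.ne', Fintype.sum_eq_zero_iff_of_nonneg fun i => sq_nonneg (c i), sq_eq_zero_iff]
  simp only [funext_iff, Pi.zero_apply, pow_eq_zero_iff two_ne_zero]

section

variable {V : Type*} [AddCommGroup V] [Module ℝ V] {g : LinearMap.BilinForm ℝ V}
  (hsymm : ∀ x y, g x y = g y x)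

include hsymm

theorem apply_self_eq_zero_of_skew_s12 {J : Module.End ℝ V} (hJ : ∀ x y, g (J x) y = -g x (J y))
    (x : V) : g (J x) x = 0 := by
  linarith [hJ x x, hsymm x (J x)]

theorem apply_swap_eq_neg_of_skew {J : Module.End ℝ V} (hJ : ∀ x y, g (J x) y = -g x (J y))
    (x y : V) : g (J y) x = -g (J x) y := by
  rw [hJ, hsymm]

theorem RJ_jacobi {J : Module.End ℝ V} (hJ : ∀ x y, g (J x) y = -g x (J y)) (X Y Z : V) :
    RJ g J Y X X Z = -3 * g (J X) Y * g (J X) Z := by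
  rw [RJ, apply_self_eq_zero_of_skew_s12 hsymm hJ, apply_swap_eq_neg_of_skew hsymm hJ]
  ring

theorem jacobi_apply_eq_of_skew {ι : Type*} [Fintype ι] (hnd : g.SeparatingLeft) {μ₀ : ℝ}
    {μ : ι → ℝ} {J : ι → Module.End ℝ V} (hskew : ∀ i x y, g (J i x) y = -g x (J i y))
    {R : V → V → V → V → ℝ}
    (hR : ∀ X Y Z W, R X Y Z W = μ₀ * R0 g X Y Z W + ∑ i, μ i * RJ g (J i) X Y Z W)
    {Jac : V → Module.End ℝ V} (hJac : ∀ X Y Z, g (Jac X Y) Z = R Y X X Z) (X Y : V) :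
    Jac X Y = μ₀ • (g X X • Y - g X Y • X) - (3 : ℝ) • (∑ i, (μ i * g (J i X) Y) • J i) X := by
  refine sub_eq_zero.mp (hnd _ fun Z => ?_)
  simp only [map_sub, map_smul, LinearMap.sub_apply, LinearMap.smul_apply, LinearMap.sum_apply,
    map_sum, smul_eq_mul, hJac, hR, R0, RJ_jacobi hsymm (hskew _), hsymm Y X, mul_sum]
  ring_nf
  rw [← sum_add_distrib]
  exact sum_eq_zero fun i _ => by ring

end

theorem clifford_totally_jacobiDual_general
    {V : Type*} [AddCommGroup V] [Module ℝ V]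
    (g : LinearMap.BilinForm ℝ V) (hsymm : ∀ x y, g x y = g y x) (hnd : g.Nondegenerate)
    {m : ℕ} (μ₀ : ℝ) (μ : Fin m → ℝ) (J : Fin m → V →ₗ[ℝ] V)
    (hskew : ∀ i, ∀ x y : V, g (J i x) y = - g x (J i y))
    (hhur : ∀ i j, J i ∘ₗ J j + J j ∘ₗ J i
      = ((if i = j then -2 else 0 : ℝ) • LinearMap.id : V →ₗ[ℝ] V))
    (R : V → V → V → V → ℝ)
    (hR : ∀ X Y Z W, R X Y Z W = μ₀ * R0 g X Y Z W + ∑ i, μ i * RJ g (J i) X Y Z W)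
    (Jac : V → V →ₗ[ℝ] V)
    (hJac : ∀ X Y Z, g (Jac X Y) Z = R Y X X Z) :
    ∀ X Y : V, X ≠ 0 →
      (∃ lam : ℝ, Module.End.HasEigenvector (Jac X) lam Y) →
      ∃ lam : ℝ, Module.End.HasEigenvector (Jac Y) lam X := by
  intro X Y hX ⟨lam, hev⟩
  have hjac := jacobi_apply_eq_of_skew hsymm hnd.1 hskew hR hJac
  set c := fun i => μ i * g (J i X) Y
  set W := ∑ i, c i • J i with hW
  have hWW (v : V) : W (W v) = -(∑ i, c i ^ 2) • v := by
    rw [← Module.End.mul_apply, sum_smul_mul_self_of_anticomm J hhur c, LinearMap.smul_apply,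
      Module.End.one_apply]
  have hJacY : Jac Y X = (μ₀ * g Y Y) • X + (-(μ₀ * g X Y) • Y + (3 : ℝ) • W Y) := by
    simp only [hjac Y X, apply_swap_eq_neg_of_skew hsymm (hskew _) X Y, hsymm Y X, mul_neg,
      neg_smul, sum_neg_distrib, LinearMap.neg_apply, hW, c]
    module
  have hdY : (μ₀ * g X X - lam) • Y = (μ₀ * g X Y) • X + (3 : ℝ) • W X := by
    rw [sub_smul, ← hev.apply_eq_smul, hjac X Y]
    module
  have hdegenerate : -((μ₀ * g X Y) ^ 2 + 3 ^ 2 * ∑ i, c i ^ 2) = 0 →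
      -(μ₀ * g X Y) • Y + (3 : ℝ) • W Y = 0 := by
    rw [neg_eq_zero, sq_add_mul_sum_sq_eq_zero_iff three_ne_zero]
    rintro ⟨hb, hc0⟩
    simp [hb, hW, hc0]
  obtain ⟨t, ht⟩ :=
    exists_eq_smul_of_smul_eq_smul (smul_neg_smul_add_smul_apply hWW hdY) hX hdegenerate
  refine ⟨μ₀ * g Y Y + t, Module.End.hasEigenvector_iff.mpr
    ⟨Module.End.mem_eigenspace_iff.mpr ?_, hX⟩⟩
  rw [hJacY, ht, add_smul]

/-- any Clifford algebraic curvature tensor (`JᵢJⱼ + JⱼJᵢ = −2δᵢⱼ id`)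
is totally Jacobi-dual. -/
theorem clifford_totally_jacobiDual
    {V : Type*} [AddCommGroup V] [Module ℝ V] [FiniteDimensional ℝ V]
    (g : LinearMap.BilinForm ℝ V) (hsymm : ∀ x y, g x y = g y x) (hnd : g.Nondegenerate)
    {m : ℕ} (μ₀ : ℝ) (μ : Fin m → ℝ) (J : Fin m → V →ₗ[ℝ] V)
    (hskew : ∀ i, ∀ x y : V, g (J i x) y = - g x (J i y))
    (hhur : ∀ i j, J i ∘ₗ J j + J j ∘ₗ J i
      = ((if i = j then -2 else 0 : ℝ) • LinearMap.id : V →ₗ[ℝ] V))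
    (R : V → V → V → V → ℝ)
    (hR : ∀ X Y Z W, R X Y Z W = μ₀ * R0 g X Y Z W + ∑ i, μ i * RJ g (J i) X Y Z W)
    (Jac : V → V →ₗ[ℝ] V)
    (hJac : ∀ X Y Z, g (Jac X Y) Z = R Y X X Z) :
    ∀ X Y : V, X ≠ 0 →
      (∃ lam : ℝ, Module.End.HasEigenvector (Jac X) lam Y) →
      ∃ lam : ℝ, Module.End.HasEigenvector (Jac Y) lam X :=
  clifford_totally_jacobiDual_general g hsymm hnd μ₀ μ J hskew hhur R hR Jac hJac
end
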